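/- For any a, λ, μ ∈ ℂ, the formulas L_{r,s}·v_{m,n} = (ar+λ+m)v_{m+r,n+s+1} + (as+μ+n)v_{m+r,n+s} define a representation of the centerless non-graded Virasoro-like algebra on the vector space with basis {v_{m,n} : m,n ∈ ℤ}; i.e., the defining bracket relations are satisfied. -/
import Mathlib


/-- The action L_{r,s}·v_{m,n} = (ar+λ+m)v_{m+r,n+s+1} + (as+μ+n)v_{m+r,n+s}
on the space with basis {v_{m,n}}, as a linear endomorphism. -/
noncomputable def actA (a lam mu : ℂ) (r s : ℤ) :
    Module.End ℂ ((ℤ × ℤ) →₀ ℂ) :=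
  Finsupp.lsum ℂ fun p : ℤ × ℤ =>
    (a * (r : ℂ) + lam + (p.1 : ℂ)) • Finsupp.lsingle (p.1 + r, p.2 + s + 1)
      + (a * (s : ℂ) + mu + (p.2 : ℂ)) • Finsupp.lsingle (p.1 + r, p.2 + s)

lemma actA_single (a lam mu : ℂ) (r s m n : ℤ) (c : ℂ) :
    actA a lam mu r s (Finsupp.single (m, n) c)
      = (a * (r : ℂ) + lam + (m : ℂ)) • Finsupp.single (m + r, n + s + 1) c
        + (a * (s : ℂ) + mu + (n : ℂ)) • Finsupp.single (m + r, n + s) c := by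
  simp [actA, Finsupp.smul_single]

set_option maxHeartbeats 1000000 in
/-- The module A_{a,λ,μ}: the formulas define a representation of the
centerless non-graded Virasoro-like algebra, i.e. the operators satisfy
[L_{h,k}, L_{r,s}] = (r-h)L_{h+r,k+s+1} + (s-k)L_{h+r,k+s}. -/
theorem stmt_5 (a lam mu : ℂ) :
    ∀ h k r s : ℤ,
      ⁅actA a lam mu h k, actA a lam mu r s⁆
        = ((r - h : ℤ) : ℂ) • actA a lam mu (h + r) (k + s + 1)
          + ((s - k : ℤ) : ℂ) • actA a lam mu (h + r) (k + s) := by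
  intro h k r s
  apply Finsupp.lhom_ext
  intro q c
  obtain ⟨m, n⟩ := q
  simp only [Ring.lie_def, LieRing.of_associative_ring_bracket, LinearMap.sub_apply, LinearMap.comp_apply, Module.End.mul_apply,
    LinearMap.add_apply, LinearMap.smul_apply, actA_single, map_add, map_smul, smul_add,
    smul_smul]
  simp only [Finsupp.smul_single]
  rw [show m + r + h = m + (h + r) by ring, show m + h + r = m + (h + r) by ring,
    show n + s + 1 + k + 1 = n + (k + s) + 2 by ring,
    show n + k + 1 + s + 1 = n + (k + s) + 2 by ring,
    show n + s + 1 + k = n + (k + s) + 1 by ring,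
    show n + k + 1 + s = n + (k + s) + 1 by ring,
    show n + s + k + 1 = n + (k + s) + 1 by ring,
    show n + k + s + 1 = n + (k + s) + 1 by ring,
    show n + s + k = n + (k + s) by ring, show n + k + s = n + (k + s) by ring,
    show n + (k + s + 1) + 1 = n + (k + s) + 2 by ring,
    show n + (k + s + 1) = n + (k + s) + 1 by ring]
  rw [sub_eq_iff_eq_add, Finsupp.ext_iff]
  intro p
  obtain ⟨p1, p2⟩ := p
  simp only [Finsupp.coe_add, Pi.add_apply, Finsupp.single_apply, Prod.mk.injEq, smul_eq_mul]
  push_cast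
  split_ifs <;> ring
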